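/- For α > 1, σ > 0, q ∈ [0,1], the quantity Ψ_α((1−q)N(0,σ²)+qN(1,σ²) ‖ N(0,σ²)) equals E_{Z∼N(0,σ²)}[(1−q+q·exp((2Z−1)/(2σ²)))^α], and this expectation is finite. -/
import Mathlib


open MeasureTheory

/-- Gaussian density on ℝ with mean `μ` and variance `σ²`. -/
noncomputable def gaussDens (μ σ : ℝ) (x : ℝ) : ℝ :=
  (σ * Real.sqrt (2 * Real.pi))⁻¹ * Real.exp (-(x - μ) ^ 2 / (2 * σ ^ 2))

lemma gaussDens_pos (μ σ : ℝ) (hσ : 0 < σ) (x : ℝ) : 0 < gaussDens μ σ x := by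
  unfold gaussDens
  have h2 : 0 < Real.sqrt (2 * Real.pi) := Real.sqrt_pos.2 (by positivity)
  positivity

lemma gaussDens_continuous (μ σ : ℝ) : Continuous (gaussDens μ σ) := by
  unfold gaussDens
  fun_prop

lemma gauss_ratio (σ : ℝ) (hσ : 0 < σ) (x : ℝ) :
    gaussDens 1 σ x = Real.exp ((2 * x - 1) / (2 * σ ^ 2)) * gaussDens 0 σ x := by
  unfold gaussDens
  have hσ2 : (σ:ℝ) ^ 2 ≠ 0 := by positivity
  have h : -(x - 1) ^ 2 / (2 * σ ^ 2)
      = (2 * x - 1) / (2 * σ ^ 2) + -(x - 0) ^ 2 / (2 * σ ^ 2) := by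
    field_simp
    ring
  rw [h, Real.exp_add]
  ring

lemma integrable_exp_mul_gauss (σ c : ℝ) (hσ : 0 < σ) :
    Integrable (fun x => Real.exp (c * x) * gaussDens 0 σ x) := by
  have hb : (0:ℝ) < 1 / (2 * σ ^ 2) := by positivity
  have h1 : Integrable (fun x : ℝ => Real.exp (-(1 / (2 * σ ^ 2)) * x ^ 2)) :=
    integrable_exp_neg_mul_sq hb
  have h2 := h1.comp_sub_right (c * σ ^ 2)
  have h3 := h2.const_mul ((σ * Real.sqrt (2 * Real.pi))⁻¹ * Real.exp (c ^ 2 * σ ^ 2 / 2))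
  refine h3.congr (Filter.Eventually.of_forall fun x => ?_)
  unfold gaussDens
  have hσ2 : (σ:ℝ) ^ 2 ≠ 0 := by positivity
  have h : c ^ 2 * σ ^ 2 / 2 + -(1 / (2 * σ ^ 2)) * (x - c * σ ^ 2) ^ 2
      = c * x + -(x - 0) ^ 2 / (2 * σ ^ 2) := by
    field_simp
    ring
  calc (σ * Real.sqrt (2 * Real.pi))⁻¹ * Real.exp (c ^ 2 * σ ^ 2 / 2) *
        Real.exp (-(1 / (2 * σ ^ 2)) * (x - c * σ ^ 2) ^ 2)
      = (σ * Real.sqrt (2 * Real.pi))⁻¹ *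
          Real.exp (c ^ 2 * σ ^ 2 / 2 + -(1 / (2 * σ ^ 2)) * (x - c * σ ^ 2) ^ 2) := by
        rw [Real.exp_add]; ring
    _ = (σ * Real.sqrt (2 * Real.pi))⁻¹ * Real.exp (c * x + -(x - 0) ^ 2 / (2 * σ ^ 2)) := by
        rw [h]
    _ = Real.exp (c * x) * ((σ * Real.sqrt (2 * Real.pi))⁻¹ *
          Real.exp (-(x - 0) ^ 2 / (2 * σ ^ 2))) := by
        rw [Real.exp_add]; ring

lemma integrable_gauss (σ : ℝ) (hσ : 0 < σ) : Integrable (gaussDens 0 σ) := by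
  have := integrable_exp_mul_gauss σ 0 hσ
  simpa using this

/-- `Ψ_α((1−q)N(0,σ²)+qN(1,σ²) ‖ N(0,σ²))` equals
`E_{Z∼N(0,σ²)}[(1−q+q·exp((2Z−1)/(2σ²)))^α]`, and this expectation is finite
(i.e. the integrand is integrable). -/
theorem mixture_psi_expectation_form (α σ q : ℝ) (hα : 1 < α) (hσ : 0 < σ)
    (hq : q ∈ Set.Icc (0:ℝ) 1) :
    ((∫ x : ℝ, ((1 - q) * gaussDens 0 σ x + q * gaussDens 1 σ x) ^ α
        * (gaussDens 0 σ x) ^ (1 - α))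
      = ∫ x : ℝ, ((1 - q) + q * Real.exp ((2 * x - 1) / (2 * σ ^ 2))) ^ α
          * gaussDens 0 σ x)
    ∧ Integrable (fun x : ℝ =>
        ((1 - q) + q * Real.exp ((2 * x - 1) / (2 * σ ^ 2))) ^ α * gaussDens 0 σ x) := by
  obtain ⟨hq0, hq1⟩ := hq
  have hα0 : (0:ℝ) ≤ α := by linarith
  set e : ℝ → ℝ := fun x => Real.exp ((2 * x - 1) / (2 * σ ^ 2)) with he
  have hepos : ∀ x, 0 < e x := fun x => Real.exp_pos _
  have hbase : ∀ x, 0 < (1 - q) + q * e x := by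
    intro x
    rcases eq_or_lt_of_le hq0 with h | h
    · simp [← h]
    · have : 0 < q * e x := mul_pos h (hepos x)
      have : (0:ℝ) ≤ 1 - q := by linarith
      linarith [mul_pos h (hepos x)]
  -- pointwise identity
  have key : ∀ x, ((1 - q) * gaussDens 0 σ x + q * gaussDens 1 σ x) ^ α
      * (gaussDens 0 σ x) ^ (1 - α)
      = ((1 - q) + q * e x) ^ α * gaussDens 0 σ x := by
    intro x
    have hg := gaussDens_pos 0 σ hσ x
    rw [gauss_ratio σ hσ x]
    have h1 : (1 - q) * gaussDens 0 σ x + q * (e x * gaussDens 0 σ x)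
        = ((1 - q) + q * e x) * gaussDens 0 σ x := by ring
    rw [h1, Real.mul_rpow (hbase x).le hg.le, mul_assoc,
      ← Real.rpow_add hg]
    norm_num
  constructor
  · exact integral_congr_ae (Filter.Eventually.of_forall key)
  · -- integrability
    have hcont : Continuous fun x => ((1 - q) + q * e x) ^ α * gaussDens 0 σ x := by
      apply Continuous.mul
      · apply Continuous.rpow_const
        · fun_prop
        · exact fun x => Or.inr hα0
      · exact gaussDens_continuous 0 σ
    have hI : Integrable (fun x => e x ^ α * gaussDens 0 σ x) := by
      have h0 := (integrable_exp_mul_gauss σ (α / σ ^ 2) hσ).const_mul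
        (Real.exp (-(α / (2 * σ ^ 2))))
      refine h0.congr (Filter.Eventually.of_forall fun x => ?_)
      have hσ2 : (σ:ℝ) ^ 2 ≠ 0 := by positivity
      have : e x ^ α = Real.exp (-(α / (2 * σ ^ 2))) * Real.exp (α / σ ^ 2 * x) := by
        rw [he, ← Real.exp_mul, ← Real.exp_add]
        congr 1
        field_simp
        ring
      dsimp only
      rw [this]; ring
    have hG : Integrable (fun x => (2:ℝ) ^ α *
        (gaussDens 0 σ x + e x ^ α * gaussDens 0 σ x)) :=
      ((integrable_gauss σ hσ).add hI).const_mul _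
    refine hG.mono' hcont.aestronglyMeasurable (Filter.Eventually.of_forall fun x => ?_)
    have hg := gaussDens_pos 0 σ hσ x
    have hF0 : 0 ≤ ((1 - q) + q * e x) ^ α * gaussDens 0 σ x :=
      mul_nonneg (Real.rpow_nonneg (hbase x).le α) hg.le
    rw [Real.norm_eq_abs, abs_of_nonneg hF0]
    have hstep : ((1 - q) + q * e x) ^ α ≤ 2 ^ α * (1 + e x ^ α) := by
      have h1 : (1 - q) + q * e x ≤ 1 + e x := by
        have h2 : q * e x ≤ e x := by
          nlinarith [(hepos x).le]
        linarith
      have h2 : ((1 - q) + q * e x) ^ α ≤ (1 + e x) ^ α :=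
        Real.rpow_le_rpow (hbase x).le h1 hα0
      rcases le_total (e x) 1 with h | h
      · have h3 : (1 + e x) ^ α ≤ (2:ℝ) ^ α :=
          Real.rpow_le_rpow (by linarith [(hepos x).le]) (by linarith) hα0
        have h4 : (0:ℝ) ≤ e x ^ α := Real.rpow_nonneg (hepos x).le α
        have h5 : (2:ℝ) ^ α ≤ 2 ^ α * (1 + e x ^ α) := by
          nlinarith [Real.rpow_nonneg (show (0:ℝ) ≤ 2 by norm_num) α]
        linarith
      · have h3 : (1 + e x) ^ α ≤ (2 * e x) ^ α :=
          Real.rpow_le_rpow (by linarith [(hepos x).le]) (by linarith) hα0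
        have h4 : (2 * e x) ^ α = 2 ^ α * e x ^ α :=
          Real.mul_rpow (by norm_num) (hepos x).le
        have h5 : (2:ℝ) ^ α * e x ^ α ≤ 2 ^ α * (1 + e x ^ α) := by
          nlinarith [Real.rpow_nonneg (show (0:ℝ) ≤ 2 by norm_num) α]
        linarith
    calc ((1 - q) + q * e x) ^ α * gaussDens 0 σ x
        ≤ 2 ^ α * (1 + e x ^ α) * gaussDens 0 σ x := by
          exact mul_le_mul_of_nonneg_right hstep hg.le
      _ = 2 ^ α * (gaussDens 0 σ x + e x ^ α * gaussDens 0 σ x) := by ring
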